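/- Let A be a finite alphabet with at least two letters, u ∈ A⁺ a nonempty word, π a permutation of A, w a prefix of Pal(u), and let σ be the w-conjugate of ψ_u ∘ π; assume σ is primitive, and let a_min be the minimal letter of σ. If (card A − 1)·(|w| + |σ(a_min)|) ≤ ‖σ‖ − card A, then there exists N ∈ ℕ such that for every n ≥ N and every word v of length n that is bispecial in L(σ), the image of the right return set of v·a_min differs from the right return set of its image: {σ(r) : r ∈ R̄(v·a_min)} ≠ R̄(σ(v·a_min)) (return sets taken in L(σ)). -/

import Mathlib

open List

section EpiDefs

variable {A : Type*}

/-- The episturmian generator ψ_a : a ↦ a, b ↦ ab for b ≠ a, as a map on words. -/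
def psiL [DecidableEq A] (a : A) : List A → List A :=
  fun u => (u.map (fun b => if b = a then [a] else [a, b])).flatten

/-- The episturmian generator ψ̄_a : a ↦ a, b ↦ ba for b ≠ a, as a map on words. -/
def psibarL [DecidableEq A] (a : A) : List A → List A :=
  fun u => (u.map (fun b => if b = a then [a] else [b, a])).flatten

/-- ψ_{u₁⋯uₙ} = ψ_{u₁} ∘ ⋯ ∘ ψ_{uₙ}. -/
def psiW [DecidableEq A] (u : List A) : List A → List A :=
  u.foldr (fun a f => psiL a ∘ f) id

/-- ψ̄_{u₁⋯uₙ} = ψ̄_{u₁} ∘ ⋯ ∘ ψ̄_{uₙ}. -/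
def psibarW [DecidableEq A] (u : List A) : List A → List A :=
  u.foldr (fun a f => psibarL a ∘ f) id

/-- There is a shortest palindrome having `x` as a prefix. -/
theorem exists_isPalClosure (x : List A) :
    ∃ p : List A, (p.reverse = p ∧ x <+: p) ∧
      ∀ q : List A, q.reverse = q → x <+: q → p.length ≤ q.length := by
  classical
  have hex : ∃ n : ℕ, ∃ p : List A, (p.reverse = p ∧ x <+: p) ∧ p.length = n :=
    ⟨(x ++ x.reverse).length, x ++ x.reverse, ⟨by simp, ⟨x.reverse, rfl⟩⟩, rfl⟩
  obtain ⟨p, hp, hlen⟩ := Nat.find_spec hex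
  refine ⟨p, hp, fun q h1 h2 => ?_⟩
  rw [hlen]
  exact Nat.find_le ⟨q, ⟨h1, h2⟩, rfl⟩

/-- `palPlus x = x⁽⁺⁾` is the shortest palindrome having `x` as a prefix. -/
noncomputable def palPlus (x : List A) : List A :=
  Classical.choose (exists_isPalClosure x)

/-- Iterated palindromic closure: Pal(ε) = ε, Pal(ua) = (Pal(u)a)⁽⁺⁾. -/
noncomputable def pal (u : List A) : List A :=
  u.foldl (fun p a => palPlus (p ++ [a])) []

/-- Longest common prefix. -/
def gcp [DecidableEq A] : List A → List A → List A
  | a :: x, b :: y => if a = b then a :: gcp x y else []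
  | _, _ => []

/-- Longest common suffix. -/
def gcs [DecidableEq A] (x y : List A) : List A :=
  (gcp x.reverse y.reverse).reverse

/-- The language of a (primitive) substitution: factors of σⁿ(a). -/
def LangS (σ : List A → List A) : Set (List A) :=
  {x | ∃ (n : ℕ) (a : A), x <:+: σ^[n] [a]}

/-- The language of the episturmian shift directed by `d`. -/
def LangD (d : ℕ → A) : Set (List A) :=
  {x | ∃ n : ℕ, x <:+: pal ((List.range n).map d)}

def LeftSpecial (L : Set (List A)) (v : List A) : Prop :=
  ∃ a b : A, a ≠ b ∧ a :: v ∈ L ∧ b :: v ∈ L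

def RightSpecial (L : Set (List A)) (v : List A) : Prop :=
  ∃ a b : A, a ≠ b ∧ v ++ [a] ∈ L ∧ v ++ [b] ∈ L

/-- The left return set of `u` in the language `L`. -/
def leftReturn (L : Set (List A)) (u : List A) : Set (List A) :=
  {r | r ++ u ∈ L ∧ (∃ s : List A, s ≠ [] ∧ r ++ u = u ++ s) ∧
    ¬∃ p q : List A, p ≠ [] ∧ q ≠ [] ∧ r ++ u = p ++ u ++ q}

/-- The right return set of `u` in the language `L`. -/
def rightReturn (L : Set (List A)) (u : List A) : Set (List A) :=
  {r | u ++ r ∈ L ∧ (∃ p : List A, p ≠ [] ∧ u ++ r = p ++ u) ∧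
    ¬∃ p q : List A, p ≠ [] ∧ q ≠ [] ∧ u ++ r = p ++ u ++ q}

/-- `σ` is an endomorphism of the free monoid A*. -/
def IsListHom (σ : List A → List A) : Prop :=
  ∀ x y : List A, σ (x ++ y) = σ x ++ σ y

/-- Primitivity of a substitution. -/
def IsPrimitiveSubst (σ : List A → List A) : Prop :=
  ∃ k : ℕ, 1 ≤ k ∧ ∀ a b : A, b ∈ σ^[k] [a]

/-- At least two distinct letters occur infinitely often in `d`. -/
def NonDegenerate (d : ℕ → A) : Prop :=
  ∃ a b : A, a ≠ b ∧ (∀ N : ℕ, ∃ n : ℕ, N ≤ n ∧ d n = a) ∧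
    (∀ N : ℕ, ∃ n : ℕ, N ≤ n ∧ d n = b)

end EpiDefs

section PsiBasics

variable {A : Type*} [DecidableEq A]

lemma psiL_nil (a : A) : psiL a ([] : List A) = [] := rfl

lemma psiL_cons (a b : A) (y : List A) :
    psiL a (b :: y) = (if b = a then [a] else [a, b]) ++ psiL a y := by
  simp [psiL]

lemma psiL_append (a : A) (x y : List A) :
    psiL a (x ++ y) = psiL a x ++ psiL a y := by
  simp [psiL]

lemma psibarL_nil (a : A) : psibarL a ([] : List A) = [] := rfl

lemma psibarL_cons (a b : A) (y : List A) :
    psibarL a (b :: y) = (if b = a then [a] else [b, a]) ++ psibarL a y := by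
  simp [psibarL]

lemma psibarL_append (a : A) (x y : List A) :
    psibarL a (x ++ y) = psibarL a x ++ psibarL a y := by
  simp [psibarL]

lemma psiL_ne_nil (a : A) {y : List A} (hy : y ≠ []) : psiL a y ≠ [] := by
  cases y with
  | nil => exact absurd rfl hy
  | cons b t =>
    rw [psiL_cons]
    by_cases h : b = a <;> simp [h]

lemma psiL_cons_head (a b : A) (y : List A) :
    ∃ t : List A, psiL a (b :: y) = a :: t := by
  rw [psiL_cons]
  by_cases h : b = a <;> simp [h]

/-- I1: ψ_a(y)·a = a·ψ̄_a(y). -/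
lemma psiL_append_a (a : A) (y : List A) :
    psiL a y ++ [a] = a :: psibarL a y := by
  induction y with
  | nil => simp [psiL, psibarL]
  | cons b t ih =>
    rw [psiL_cons, psibarL_cons]
    by_cases h : b = a
    · simp only [h, if_pos rfl]
      rw [List.append_assoc, ih]
      rfl
    · simp only [if_neg h]
      rw [List.append_assoc, ih]
      rfl

lemma psiL_reverse (a : A) (y : List A) :
    (psiL a y).reverse = psibarL a y.reverse := by
  induction y with
  | nil => simp [psiL, psibarL]
  | cons b t ih =>
    rw [psiL_cons, List.reverse_append, ih, List.reverse_cons, psibarL_append]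
    by_cases h : b = a <;> simp [h, psibarL_cons, psibarL_nil]

lemma psiL_length_add (a : A) (y : List A) :
    (psiL a y).length + y.count a = 2 * y.length := by
  induction y with
  | nil => simp [psiL]
  | cons b t ih =>
    rw [psiL_cons, List.length_append]
    by_cases h : b = a
    · subst h
      rw [if_pos rfl, List.count_cons_self]
      simp only [List.length_cons, List.length_nil]
      omega
    · rw [if_neg h, List.count_cons_of_ne h]
      simp only [List.length_cons, List.length_nil]
      omega

lemma psiL_length_reverse (a : A) (y : List A) :
    (psiL a y.reverse).length = (psiL a y).length := by
  have h1 := psiL_length_add a y.reverse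
  have h2 := psiL_length_add a y
  rw [List.count_reverse, List.length_reverse] at h1
  omega

lemma psiL_injective (a : A) : Function.Injective (psiL a) := by
  intro y₁
  induction y₁ with
  | nil =>
    intro y₂ h
    cases y₂ with
    | nil => rfl
    | cons b t =>
      exfalso
      rw [psiL_nil, psiL_cons] at h
      by_cases hb : b = a <;> simp [hb] at h
  | cons b t ih =>
    intro y₂ h
    cases y₂ with
    | nil =>
      exfalso
      rw [psiL_nil, psiL_cons] at h
      by_cases hb : b = a <;> simp [hb] at h
    | cons c s =>
      rw [psiL_cons, psiL_cons] at h
      by_cases hb : b = a <;> by_cases hc : c = a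
      · rw [if_pos hb, if_pos hc] at h
        simp only [List.cons_append, List.nil_append] at h
        have h2 : psiL a t = psiL a s := by injection h
        rw [hb, hc, ih h2]
      · exfalso
        rw [if_pos hb, if_neg hc] at h
        simp only [List.cons_append, List.nil_append] at h
        have h2 : psiL a t = c :: psiL a s := by injection h
        cases t with
        | nil => rw [psiL_nil] at h2; exact absurd h2 (by simp)
        | cons d t' =>
          obtain ⟨t'', ht''⟩ := psiL_cons_head a d t'
          rw [ht''] at h2
          have : a = c := by injection h2
          exact hc this.symm
      · exfalso
        rw [if_neg hb, if_pos hc] at h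
        simp only [List.cons_append, List.nil_append] at h
        have h2 : b :: psiL a t = psiL a s := by injection h
        cases s with
        | nil => rw [psiL_nil] at h2; exact absurd h2 (by simp)
        | cons d s' =>
          obtain ⟨s'', hs''⟩ := psiL_cons_head a d s'
          rw [hs''] at h2
          have : b = a := by injection h2
          exact hb this
      · rw [if_neg hb, if_neg hc] at h
        simp only [List.cons_append, List.nil_append] at h
        have h2 : b :: psiL a t = c :: psiL a s := by injection h
        have hbc : b = c := by injection h2
        have h3 : psiL a t = psiL a s := by injection h2
        rw [hbc, ih h3]

lemma psiW_nil_word (u : List A) : psiW u ([] : List A) = [] := by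
  induction u with
  | nil => rfl
  | cons a t ih => show psiL a (psiW t []) = []; rw [ih]; rfl

lemma psiW_cons_dir (a : A) (u : List A) (y : List A) :
    psiW (a :: u) y = psiL a (psiW u y) := rfl

lemma psiW_append (u : List A) (x y : List A) :
    psiW u (x ++ y) = psiW u x ++ psiW u y := by
  induction u with
  | nil => rfl
  | cons a t ih =>
    rw [psiW_cons_dir, psiW_cons_dir, psiW_cons_dir, ih, psiL_append]

lemma psiW_append_dir (u v : List A) (y : List A) :
    psiW (u ++ v) y = psiW u (psiW v y) := by
  induction u with
  | nil => rfl
  | cons a t ih => rw [List.cons_append, psiW_cons_dir, psiW_cons_dir, ih]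

lemma psiW_ne_nil (u : List A) {y : List A} (hy : y ≠ []) : psiW u y ≠ [] := by
  induction u with
  | nil => exact hy
  | cons a t ih => rw [psiW_cons_dir]; exact psiL_ne_nil a ih

lemma psiL_prefix_mono (a : A) {x y : List A} (h : x <+: y) :
    psiL a x <+: psiL a y := by
  obtain ⟨t, rfl⟩ := h
  exact ⟨psiL a t, (psiL_append a x t).symm⟩

end PsiBasics
section PalPlusTheory

variable {A : Type*}

lemma getElem_idx_congr {l : List A} {i j : ℕ} (h : i = j) (hi : i < l.length) :
    l[i] = l[j]'(h ▸ hi) := by subst h; rfl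

lemma palPlus_palindrome (x : List A) : (palPlus x).reverse = palPlus x :=
  (Classical.choose_spec (exists_isPalClosure x)).1.1

lemma prefix_palPlus (x : List A) : x <+: palPlus x :=
  (Classical.choose_spec (exists_isPalClosure x)).1.2

lemma palPlus_min (x : List A) {q : List A} (h1 : q.reverse = q) (h2 : x <+: q) :
    (palPlus x).length ≤ q.length :=
  (Classical.choose_spec (exists_isPalClosure x)).2 q h1 h2

lemma pal_getElem {q : List A} (hq : q.reverse = q) {i : ℕ} (hi : i < q.length) :
    q[i] = q[q.length - 1 - i]'(by omega) := by
  have h1 : q.reverse[i]'(by simpa using hi) = q[i] := List.getElem_of_eq hq _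
  rw [← h1, List.getElem_reverse]

lemma prefix_getElem {x q : List A} (h : x <+: q) {i : ℕ} (hi : i < x.length) :
    q[i]'(lt_of_lt_of_le hi h.length_le) = x[i] := by
  obtain ⟨t, rfl⟩ := h
  exact List.getElem_append_left hi

/-- Two palindromes with the same prefix `y` and equal length `≤ 2|y|` coincide. -/
lemma pal_ext {y q₁ q₂ : List A} (h₁ : q₁.reverse = q₁) (h₂ : q₂.reverse = q₂)
    (p₁ : y <+: q₁) (p₂ : y <+: q₂) (hlen : q₁.length = q₂.length)
    (hle : q₁.length ≤ 2 * y.length) : q₁ = q₂ := by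
  apply List.ext_getElem hlen
  intro i hi₁ hi₂
  by_cases hy : i < y.length
  · rw [prefix_getElem p₁ hy, prefix_getElem p₂ hy]
  · push_neg at hy
    rw [pal_getElem h₁ hi₁, pal_getElem h₂ hi₂]
    have hlt : q₁.length - 1 - i < y.length := by omega
    have hlt₂ : q₂.length - 1 - i < y.length := by omega
    rw [prefix_getElem p₁ hlt, prefix_getElem p₂ hlt₂]
    have he : q₁.length - 1 - i = q₂.length - 1 - i := by omega
    rw [getElem_idx_congr (l := y) he]

/-- Overlap lemma: if `Q` is a palindrome with prefix `M` and `|Q| ≤ 2|M|`,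
then the suffix of `M` of length `2|M| - |Q|` is a palindrome. -/
lemma pal_suffix_of_overlap {M Q : List A} (hQ : Q.reverse = Q) (hp : M <+: Q)
    (hle : Q.length ≤ 2 * M.length) :
    (M.drop (Q.length - M.length)).reverse = M.drop (Q.length - M.length) := by
  set j := Q.length - M.length with hj
  have hjM : j ≤ M.length := by have := hp.length_le; omega
  have hlen : (M.drop j).length = M.length - j := List.length_drop ..
  have key : ∀ t (ht : t < M.length - j),
      (M.drop j)[t]'(by omega) = M[M.length - 1 - t]'(by omega) := by
    intro t ht
    have h1 : (M.drop j)[t]'(by omega) = M[j + t]'(by omega) := List.getElem_drop ..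
    have h2 : M[j + t]'(by omega) = Q[j + t]'(by have := hp.length_le; omega) :=
      (prefix_getElem hp (by omega)).symm
    have h3 : Q[j + t]'(by have := hp.length_le; omega)
        = Q[Q.length - 1 - (j + t)]'(by have := hp.length_le; omega) :=
      pal_getElem hQ _
    have h4 : Q.length - 1 - (j + t) = M.length - 1 - t := by
      have := hp.length_le; omega
    have h5 : Q[Q.length - 1 - (j+t)]'(by have := hp.length_le; omega)
        = M[M.length - 1 - t]'(by omega) := by
      rw [getElem_idx_congr (l := Q) h4]
      exact prefix_getElem hp (by omega)
    rw [h1, h2, h3, h5]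
  apply List.ext_getElem (by rw [List.length_reverse])
  intro i hi₁ hi₂
  rw [List.getElem_reverse]
  have hi : i < M.length - j := by rw [hlen] at hi₂; exact hi₂
  have hlen' : (M.drop j).length - 1 - i < M.length - j := by omega
  rw [key _ hlen', List.getElem_drop]
  apply getElem_idx_congr
  omega

variable [DecidableEq A]

lemma lps_exists (y : List A) : ∃ i, (y.drop i).reverse = y.drop i :=
  ⟨y.length, by simp⟩

/-- Index of the longest palindromic suffix. -/
def lpsIdx (y : List A) : ℕ := Nat.find (lps_exists y)

lemma lpsIdx_spec (y : List A) : (y.drop (lpsIdx y)).reverse = y.drop (lpsIdx y) :=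
  Nat.find_spec (lps_exists y)

lemma lpsIdx_min (y : List A) {j : ℕ} (hj : j < lpsIdx y) :
    ¬ (y.drop j).reverse = y.drop j :=
  Nat.find_min (lps_exists y) hj

lemma lpsIdx_le (y : List A) : lpsIdx y ≤ y.length :=
  Nat.find_min' (lps_exists y) (by simp)

lemma lpsIdx_lt {y : List A} (hy : y ≠ []) : lpsIdx y < y.length := by
  have hpos : 0 < y.length := List.length_pos_iff.2 hy
  have h : (y.drop (y.length - 1)).reverse = y.drop (y.length - 1) := by
    have hl : (y.drop (y.length - 1)).length = 1 := by
      rw [List.length_drop]; omega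
    match hd : y.drop (y.length - 1), hl with
    | [c], _ => rfl
  have h2 : lpsIdx y ≤ y.length - 1 := Nat.find_min' (lps_exists y) h
  omega

lemma palPlus_lower {y q : List A} (h1 : q.reverse = q) (h2 : y <+: q) :
    y.length + lpsIdx y ≤ q.length := by
  rcases le_or_gt (2 * y.length) q.length with h | h
  · have := lpsIdx_le y; omega
  · have hov := pal_suffix_of_overlap h1 h2 (by omega)
    have hle := h2.length_le
    by_contra hc
    push_neg at hc
    exact lpsIdx_min y (by omega) hov

lemma palPlus_eq (y : List A) :
    palPlus y = y ++ (y.take (lpsIdx y)).reverse := by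
  have hzh : y.take (lpsIdx y) ++ y.drop (lpsIdx y) = y := List.take_append_drop _ y
  have hyrev : y.reverse = y.drop (lpsIdx y) ++ (y.take (lpsIdx y)).reverse := by
    conv_lhs => rw [← hzh]
    rw [List.reverse_append, lpsIdx_spec y]
  have hQpal : (y ++ (y.take (lpsIdx y)).reverse).reverse
      = y ++ (y.take (lpsIdx y)).reverse := by
    rw [List.reverse_append, List.reverse_reverse, hyrev, ← List.append_assoc, hzh]
  have hQpre : y <+: y ++ (y.take (lpsIdx y)).reverse := List.prefix_append ..
  have hQlen : (y ++ (y.take (lpsIdx y)).reverse).length = y.length + lpsIdx y := by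
    rw [List.length_append, List.length_reverse, List.length_take]
    have := lpsIdx_le y
    omega
  have hlen1 : (palPlus y).length ≤ y.length + lpsIdx y := by
    have := palPlus_min y hQpal hQpre
    omega
  have hlen2 : y.length + lpsIdx y ≤ (palPlus y).length :=
    palPlus_lower (palPlus_palindrome y) (prefix_palPlus y)
  apply pal_ext (palPlus_palindrome y) hQpal (prefix_palPlus y) hQpre
  · omega
  · have := lpsIdx_le y
    omega

lemma palPlus_length (y : List A) : (palPlus y).length = y.length + lpsIdx y := by
  rw [palPlus_eq, List.length_append, List.length_reverse, List.length_take]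
  have := lpsIdx_le y
  omega

lemma pal_append_letter (u : List A) (b : A) :
    pal (u ++ [b]) = palPlus (pal u ++ [b]) := by
  simp [pal, List.foldl_append]

lemma pal_nil : pal ([] : List A) = [] := rfl

lemma pal_palindrome (u : List A) : (pal u).reverse = pal u := by
  induction u using List.reverseRecOn with
  | nil => rfl
  | append_singleton u b _ => rw [pal_append_letter]; exact palPlus_palindrome _

lemma pal_prefix_letter (u : List A) (b : A) : pal u <+: pal (u ++ [b]) := by
  rw [pal_append_letter]
  exact ((List.prefix_append _ _).trans (prefix_palPlus _))

end PalPlusTheory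
section CoreLemma

variable {A : Type*} [DecidableEq A]

lemma suffix_append_cases {s B t : List A} (h : s <:+ B ++ t) :
    s <:+ t ∨ ∃ s₁, s₁ <:+ B ∧ s = s₁ ++ t := by
  induction B with
  | nil => exact Or.inl (by simpa using h)
  | cons x B' ih =>
    rw [List.cons_append, List.suffix_cons_iff] at h
    rcases h with h | h
    · exact Or.inr ⟨x :: B', List.suffix_refl _, h⟩
    · rcases ih h with h' | ⟨s₁, hs₁, rfl⟩
      · exact Or.inl h'
      · exact Or.inr ⟨s₁, hs₁.trans (List.suffix_cons x B'), rfl⟩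

lemma suffix_singleton_append {s w : List A} {e : A} (h : s <:+ w ++ [e]) (hs : s ≠ []) :
    ∃ s₁, s₁ <:+ w ∧ s = s₁ ++ [e] := by
  rcases suffix_append_cases h with h' | ⟨s₁, hs₁, rfl⟩
  · rw [List.suffix_cons_iff] at h'
    rcases h' with rfl | h'
    · exact ⟨[], List.nil_suffix, rfl⟩
    · rw [List.suffix_nil] at h'; exact absurd h' hs
  · exact ⟨s₁, hs₁, rfl⟩

lemma suffix_psiL {a : A} {s y : List A} (h : s <:+ psiL a y) :
    (∃ y₂, y₂ <:+ y ∧ s = psiL a y₂) ∨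
    (∃ y₁ c y₂, y = y₁ ++ c :: y₂ ∧ c ≠ a ∧ s = c :: psiL a y₂) := by
  induction y with
  | nil =>
    rw [psiL_nil, List.suffix_nil] at h
    exact Or.inl ⟨[], List.nil_suffix, by rw [h, psiL_nil]⟩
  | cons b y' ih =>
    rw [psiL_cons] at h
    rcases suffix_append_cases h with h' | ⟨s₁, hs₁, rfl⟩
    · rcases ih h' with ⟨y₂, hy₂, rfl⟩ | ⟨y₁, c, y₂, rfl, hc, rfl⟩
      · exact Or.inl ⟨y₂, hy₂.trans (List.suffix_cons b y'), rfl⟩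
      · exact Or.inr ⟨b :: y₁, c, y₂, rfl, hc, rfl⟩
    · by_cases hb : b = a
      · rw [if_pos hb] at hs₁
        rw [List.suffix_cons_iff] at hs₁
        rcases hs₁ with rfl | hs₁
        · refine Or.inl ⟨b :: y', List.suffix_refl _, ?_⟩
          rw [psiL_cons, if_pos hb]
        · rw [List.suffix_nil] at hs₁
          subst hs₁
          exact Or.inl ⟨y', (List.suffix_cons b y'), rfl⟩
      · rw [if_neg hb] at hs₁
        rw [List.suffix_cons_iff] at hs₁
        rcases hs₁ with rfl | hs₁
        · refine Or.inl ⟨b :: y', List.suffix_refl _, ?_⟩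
          rw [psiL_cons, if_neg hb]
        · rw [List.suffix_cons_iff] at hs₁
          rcases hs₁ with rfl | hs₁
          · exact Or.inr ⟨[], b, y', rfl, hb, rfl⟩
          · rw [List.suffix_nil] at hs₁
            subst hs₁
            exact Or.inl ⟨y', (List.suffix_cons b y'), rfl⟩

lemma mySuffix_of_suffix_length_le {s₁ s₂ y : List A} (h₁ : s₁ <:+ y) (h₂ : s₂ <:+ y)
    (hl : s₁.length ≤ s₂.length) : s₁ <:+ s₂ := by
  rw [← List.reverse_prefix] at h₁ h₂ ⊢
  exact List.prefix_of_prefix_length_le h₁ h₂ (by simpa using hl)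

lemma lpsIdx_le_of_pal_suffix {s y : List A} (h : s <:+ y) (hs : s.reverse = s) :
    lpsIdx y ≤ y.length - s.length := by
  obtain ⟨p, rfl⟩ := h
  have hlen : (p ++ s).length - s.length = p.length := by simp
  have hd : (p ++ s).drop p.length = s := by simp
  rw [hlen]
  by_contra hc
  push_neg at hc
  have := lpsIdx_min (p ++ s) hc
  rw [hd] at this
  exact this hs

lemma psiL_a_prefix (a : A) (y s : List A) :
    psiL a y ++ [a] <+: psiL a (y ++ s) ++ [a] := by
  cases s with
  | nil => simp
  | cons c s' =>
    rw [psiL_append]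
    obtain ⟨t, ht⟩ := psiL_cons_head a c s'
    rw [ht]
    refine ⟨t ++ [a], ?_⟩
    simp

/-- The core commutation lemma: for a palindrome `q`,
`(ψ_a(q)·a·b)⁺ = ψ_a((q·b)⁺)·a`. -/
lemma core_lemma (a b : A) {q : List A} (hq : q.reverse = q) :
    palPlus (psiL a q ++ [a, b]) = psiL a (palPlus (q ++ [b])) ++ [a] := by
  set y := q ++ [b] with hy
  have hyne : y ≠ [] := by simp [hy]
  set i₀ := lpsIdx y with hi₀
  set z := y.take i₀ with hz
  set hst := y.drop i₀ with hhst
  have hzh : z ++ hst = y := List.take_append_drop _ y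
  have hstpal : hst.reverse = hst := lpsIdx_spec y
  have hstne : hst ≠ [] := by
    have h1 := lpsIdx_lt hyne
    intro hcon
    have h2 : hst.length = 0 := by rw [hcon]; rfl
    rw [hhst, List.length_drop] at h2
    omega
  have hstsuf : hst <:+ y := hhst ▸ List.drop_suffix _ _
  have hP : palPlus y = y ++ z.reverse := palPlus_eq y
  set M := psiL a q ++ [a, b] with hM
  set R := psiL a (palPlus y) ++ [a] with hR
  have hMy : (b = a ∧ M = psiL a y ++ [a]) ∨ (b ≠ a ∧ M = psiL a y) := by
    by_cases hb : b = a
    · refine Or.inl ⟨hb, ?_⟩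
      rw [hM, hy, psiL_append, psiL_cons, psiL_nil, if_pos hb, hb]
      simp
    · refine Or.inr ⟨hb, ?_⟩
      rw [hM, hy, psiL_append, psiL_cons, psiL_nil, if_neg hb]
      simp
  have hRpal : R.reverse = R := by
    rw [hR, List.reverse_append, List.reverse_singleton, psiL_reverse,
      palPlus_palindrome]
    rw [show ([a] : List A) ++ psibarL a (palPlus y) = a :: psibarL a (palPlus y) from rfl,
      ← psiL_append_a]
  have hsplit : (psiL a y).length = (psiL a z).length + (psiL a hst).length := by
    conv_lhs => rw [← hzh]
    rw [psiL_append, List.length_append]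
  have hstpos : 1 ≤ (psiL a hst).length :=
    List.length_pos_iff.2 (psiL_ne_nil a hstne)
  have hRlen : R.length = (psiL a y).length + (psiL a z).length + 1 := by
    rw [hR, List.length_append, hP, psiL_append, List.length_append,
      psiL_length_reverse]
    simp
  have hMlen : (b = a ∧ M.length = (psiL a y).length + 1)
      ∨ (b ≠ a ∧ M.length = (psiL a y).length) := by
    rcases hMy with ⟨hb, hMeq⟩ | ⟨hb, hMeq⟩
    · exact Or.inl ⟨hb, by rw [hMeq]; simp⟩
    · exact Or.inr ⟨hb, by rw [hMeq]⟩
  have hRle2M : R.length ≤ 2 * M.length := by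
    rcases hMlen with ⟨hb, hMeq⟩ | ⟨hb, hMeq⟩ <;> rw [hMeq] <;> omega
  have hMR : M <+: R := by
    rcases hMy with ⟨hb, hMeq⟩ | ⟨hb, hMeq⟩
    · rw [hMeq, hR, hP]
      exact psiL_a_prefix a y z.reverse
    · rw [hMeq, hR]
      exact (psiL_prefix_mono a (prefix_palPlus y)).trans (List.prefix_append _ _)
  have hmin : ∀ Q : List A, Q.reverse = Q → M <+: Q → R.length ≤ Q.length := by
    intro Q hQpal hMQ
    rcases le_or_gt (2 * M.length) Q.length with hbig | hsmall
    · omega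
    · have hH := pal_suffix_of_overlap hQpal hMQ (by omega)
      set H := M.drop (Q.length - M.length) with hHd
      have hHsuf : H <:+ M := List.drop_suffix _ _
      have hHlen : H.length = 2 * M.length - Q.length := by
        rw [hHd, List.length_drop]
        have := hMQ.length_le
        omega
      suffices hsuff : H.length + R.length ≤ 2 * M.length by
        have := hMQ.length_le
        omega
      by_cases hHne : H = []
      · rw [hHne]; simpa using hRle2M
      · rcases hMy with ⟨hb, hMeq⟩ | ⟨hb, hMeq⟩
        · -- b = a : M = ψ_a(y) ++ [a]
          rw [hMeq] at hHsuf
          obtain ⟨H₁, hH₁, hHsp⟩ := suffix_singleton_append hHsuf hHne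
          rcases suffix_psiL hH₁ with ⟨y₂, hy₂, hHeq⟩ | ⟨y₁, c, y₂, hysplit, hc, hHeq⟩
          · -- aligned: H = ψ_a(y₂) ++ [a]
            rw [hHeq] at hHsp
            have hHpal := hH
            rw [hHsp] at hHpal
            have h1 : (psiL a y₂ ++ [a]).reverse = psiL a y₂.reverse ++ [a] := by
              rw [List.reverse_append, List.reverse_singleton, psiL_reverse]
              rw [show ([a] : List A) ++ psibarL a y₂.reverse
                = a :: psibarL a y₂.reverse from rfl, ← psiL_append_a]
            have h3 : psiL a y₂.reverse ++ [a] = psiL a y₂ ++ [a] := by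
              rw [← h1, hHpal]
            have h4 : psiL a y₂.reverse = psiL a y₂ :=
              List.append_inj_left' h3 rfl
            have hy₂pal : y₂.reverse = y₂ := psiL_injective a h4
            have hy₂hst : y₂.length ≤ hst.length := by
              have h5 := lpsIdx_le_of_pal_suffix hy₂ hy₂pal
              have h6 := hy₂.length_le
              rw [hhst, List.length_drop]
              omega
            obtain ⟨d₀, hd₀⟩ := mySuffix_of_suffix_length_le hy₂ hstsuf hy₂hst
            have hlenle : (psiL a y₂).length ≤ (psiL a hst).length := by
              rw [← hd₀, psiL_append, List.length_append]
              omega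
            have hHl : H.length = (psiL a y₂).length + 1 := by rw [hHsp]; simp
            rcases hMlen with ⟨_, hMeq2⟩ | ⟨hb2, _⟩
            · rw [hHl, hMeq2, hRlen]; omega
            · exact absurd hb hb2
          · -- mid-block: impossible
            exfalso
            rw [hHeq] at hHsp
            have hHpal := hH
            rw [hHsp] at hHpal
            have h1 : ((c :: psiL a y₂) ++ [a]).reverse
                = a :: ((psiL a y₂).reverse ++ [c]) := by simp
            rw [h1] at hHpal
            rw [List.cons_append] at hHpal
            have : a = c := by injection hHpal
            exact hc this.symm
        · -- b ≠ a : M = ψ_a(y)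
          rw [hMeq] at hHsuf
          rcases suffix_psiL hHsuf with ⟨y₂, hy₂, hHeq⟩ | ⟨y₁, c, y₂, hysplit, hc, hHeq⟩
          · -- aligned nonempty: impossible
            exfalso
            obtain ⟨e, y₂', hey⟩ : ∃ e y₂', y₂ = e :: y₂' := by
              cases y₂ with
              | nil => rw [hHeq, psiL_nil] at hHne; exact absurd rfl hHne
              | cons e y₂' => exact ⟨e, y₂', rfl⟩
            obtain ⟨t, ht⟩ := psiL_cons_head a e y₂'
            have hyend : psiL a y = (psiL a q ++ [a]) ++ [b] := by
              rw [← hMeq, hM]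
              simp
            rw [hyend] at hHsuf
            obtain ⟨H₁, _, hHsplit⟩ := suffix_singleton_append hHsuf hHne
            have h1 : H.reverse = b :: H₁.reverse := by rw [hHsplit]; simp
            rw [hH] at h1
            rw [hHeq, hey, ht] at h1
            have : a = b := by injection h1
            exact hb this.symm
          · -- mid-block: H = c :: ψ_a(y₂)
            have hHpal := hH
            rw [hHeq] at hHpal
            have h1 : (psiL a y₂).reverse ++ [c] = c :: psiL a y₂ := by
              rw [← hHpal]; simp
            rw [psiL_reverse] at h1
            have h4 : psiL a (c :: y₂) = psiL a (y₂.reverse ++ [c]) := by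
              rw [psiL_cons, if_neg hc, psiL_append, psiL_cons, psiL_nil, if_neg hc]
              rw [List.append_nil]
              calc ([a, c] : List A) ++ psiL a y₂
                  = [a] ++ (c :: psiL a y₂) := by simp
                _ = [a] ++ (psibarL a y₂.reverse ++ [c]) := by rw [← h1]
                _ = ([a] ++ psibarL a y₂.reverse) ++ [c] := by simp
                _ = (psiL a y₂.reverse ++ [a]) ++ [c] := by
                    rw [show ([a] : List A) ++ psibarL a y₂.reverse
                      = a :: psibarL a y₂.reverse from rfl, ← psiL_append_a]
                _ = psiL a y₂.reverse ++ [a, c] := by simp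
            have h5 : c :: y₂ = y₂.reverse ++ [c] := psiL_injective a h4
            have hcy₂pal : (c :: y₂).reverse = c :: y₂ := by
              rw [List.reverse_cons, ← h5]
            have hcy₂suf : (c :: y₂) <:+ y := ⟨y₁, by rw [← hysplit]⟩
            have hy₂hst : (c :: y₂).length ≤ hst.length := by
              have h6 := lpsIdx_le_of_pal_suffix hcy₂suf hcy₂pal
              have h7 := hcy₂suf.length_le
              rw [hhst, List.length_drop]
              omega
            obtain ⟨d₀, hd₀⟩ := mySuffix_of_suffix_length_le hcy₂suf hstsuf hy₂hst
            have hlenle : (psiL a (c :: y₂)).length ≤ (psiL a hst).length := by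
              rw [← hd₀, psiL_append, List.length_append]
              omega
            have hHl : H.length + 1 = (psiL a (c :: y₂)).length := by
              rw [hHeq, psiL_cons, if_neg hc]
              simp
            rcases hMlen with ⟨hb2, _⟩ | ⟨_, hMeq2⟩
            · exact absurd hb2 hb
            · rw [hMeq2, hRlen]
              omega
  have h1 : (palPlus M).length ≤ R.length := palPlus_min M hRpal hMR
  have h2 : R.length ≤ (palPlus M).length :=
    hmin (palPlus M) (palPlus_palindrome M) (prefix_palPlus M)
  exact pal_ext (palPlus_palindrome M) hRpal (prefix_palPlus M) hMR
    (by omega) (by omega)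

end CoreLemma
section Justin

variable {A : Type*} [DecidableEq A]

lemma palPlus_singleton (a : A) : palPlus [a] = [a] := by
  have h0 : lpsIdx [a] ≤ 0 := by
    have := lpsIdx_le_of_pal_suffix (List.suffix_refl [a]) (by simp)
    simpa using this
  rw [palPlus_eq, Nat.le_zero.1 h0]
  simp

lemma pal_cons (a : A) (w : List A) :
    pal (a :: w) = psiL a (pal w) ++ [a] := by
  induction w using List.reverseRecOn with
  | nil =>
    show pal ([] ++ [a]) = psiL a (pal []) ++ [a]
    rw [pal_append_letter, pal_nil, psiL_nil]
    simpa using palPlus_singleton a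
  | append_singleton w b ih =>
    have hsh : a :: (w ++ [b]) = (a :: w) ++ [b] := rfl
    rw [hsh, pal_append_letter, ih, pal_append_letter, List.append_assoc]
    have : ([a] : List A) ++ [b] = [a, b] := rfl
    rw [this]
    exact core_lemma a b (pal_palindrome w)

/-- Justin's formula: Pal(u·b) = ψ_u(b)·Pal(u). -/
lemma justin (u : List A) (b : A) : pal (u ++ [b]) = psiW u [b] ++ pal u := by
  induction u with
  | nil =>
    have h0 : [b] = ([] : List A) ++ [b] := rfl
    show pal ([] ++ [b]) = psiW [] [b] ++ pal []
    rw [pal_append_letter, pal_nil]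
    simpa [psiW] using palPlus_singleton b
  | cons a u' ih =>
    have hsh : (a :: u') ++ [b] = a :: (u' ++ [b]) := rfl
    rw [hsh, pal_cons, ih, psiL_append, pal_cons, psiW_cons_dir]
    simp

lemma pal_length_letter (u : List A) (b : A) :
    (pal (u ++ [b])).length = (psiW u [b]).length + (pal u).length := by
  rw [justin, List.length_append]

/-- The norm identity: ‖ψ_u‖ = (card A − 1)·|Pal(u)| + card A. -/
lemma psi_norm [Fintype A] [Nonempty A] (u : List A) :
    ∑ b : A, (psiW u [b]).length
      = (Fintype.card A - 1) * (pal u).length + Fintype.card A := by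
  obtain ⟨k', hk'⟩ : ∃ k', Fintype.card A = k' + 1 :=
    ⟨Fintype.card A - 1, by have := Fintype.card_pos (α := A); omega⟩
  have hk'' : Fintype.card A - 1 = k' := by omega
  rw [hk'']
  induction u using List.reverseRecOn with
  | nil =>
    simp only [psiW, List.foldr_nil, pal_nil, List.length_nil, Nat.mul_zero, Nat.zero_add]
    show ∑ _b : A, (1 : ℕ) = Fintype.card A
    simp
  | append_singleton u a ih =>
    have hstep : ∀ b : A, psiW (u ++ [a]) [b]
        = if b = a then psiW u [a] else psiW u [a] ++ psiW u [b] := by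
      intro b
      rw [psiW_append_dir]
      show psiW u (psiL a [b]) = _
      rw [psiL_cons, psiL_nil, List.append_nil]
      by_cases hb : b = a
      · rw [if_pos hb, if_pos hb]
      · rw [if_neg hb, if_neg hb]
        show psiW u ([a] ++ [b]) = _
        rw [psiW_append]
    have hLa : ∀ b : A, (psiW (u ++ [a]) [b]).length
        = if b = a then (psiW u [a]).length
          else (psiW u [a]).length + (psiW u [b]).length := by
      intro b
      rw [hstep b]
      by_cases hb : b = a
      · rw [if_pos hb, if_pos hb]
      · rw [if_neg hb, if_neg hb, List.length_append]
    have hite : (∑ b : A, if b = a then (psiW u [b]).length else 0)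
        = (psiW u [a]).length := by
      rw [Finset.sum_ite_eq' Finset.univ a (fun b => (psiW u [b]).length)]
      simp
    have hsum : (∑ b : A, (psiW (u ++ [a]) [b]).length)
          + (∑ b : A, if b = a then (psiW u [b]).length else 0)
        = ∑ b : A, ((psiW u [a]).length + (psiW u [b]).length) := by
      rw [← Finset.sum_add_distrib]
      apply Finset.sum_congr rfl
      intro b _
      rw [hLa b]
      by_cases hb : b = a
      · rw [if_pos hb, if_pos hb, hb]
      · rw [if_neg hb, if_neg hb]
        omega
    rw [hite] at hsum
    have hconst : ∑ _b : A, (psiW u [a]).length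
        = Fintype.card A * (psiW u [a]).length := by
      rw [Finset.sum_const, Finset.card_univ, smul_eq_mul]
    have hsplit2 : ∑ b : A, ((psiW u [a]).length + (psiW u [b]).length)
        = Fintype.card A * (psiW u [a]).length + ∑ b : A, (psiW u [b]).length := by
      rw [Finset.sum_add_distrib, hconst]
    rw [hsplit2, ih, hk'] at hsum
    rw [pal_length_letter]
    have hmul1 : k' * ((psiW u [a]).length + (pal u).length)
        = k' * (psiW u [a]).length + k' * (pal u).length := Nat.mul_add ..
    have hmul2 : (k' + 1) * (psiW u [a]).length
        = k' * (psiW u [a]).length + (psiW u [a]).length := by ring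
    rw [hmul2] at hsum
    rw [hmul1]
    omega

end Justin
section LangMachinery

variable {A : Type*} [DecidableEq A]

lemma hom_nil {σ : List A → List A} (h : IsListHom σ) : σ [] = [] := by
  have h1 := h [] []
  rw [List.nil_append] at h1
  have h2 := congrArg List.length h1
  rw [List.length_append] at h2
  have : (σ []).length = 0 := by omega
  exact List.length_eq_zero_iff.1 this

lemma isListHom_iterate {σ : List A → List A} (h : IsListHom σ) (n : ℕ) :
    IsListHom σ^[n] := by
  induction n with
  | zero => intro x y; simp
  | succ n ih =>
    intro x y
    rw [Function.iterate_succ_apply', Function.iterate_succ_apply',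
      Function.iterate_succ_apply', ih, h]

lemma hom_infix {σ : List A → List A} (h : IsListHom σ) {x z : List A}
    (hx : x <:+: z) : σ x <:+: σ z := by
  obtain ⟨l, r, rfl⟩ := hx
  refine ⟨σ l, σ r, ?_⟩
  rw [← h, ← h]

lemma hom_ne_nil {σ : List A → List A} (h : IsListHom σ) (hne : ∀ a : A, σ [a] ≠ [])
    {z : List A} (hz : z ≠ []) : σ z ≠ [] := by
  cases z with
  | nil => exact absurd rfl hz
  | cons c z' =>
    have h1 : σ (c :: z') = σ [c] ++ σ z' := by
      rw [← h]; rfl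
    rw [h1]
    intro hcon
    exact hne c (List.append_eq_nil_iff.1 hcon).1

lemma iterate_ne_nil {σ : List A → List A} (h : IsListHom σ) (hne : ∀ a : A, σ [a] ≠ [])
    (n : ℕ) {z : List A} (hz : z ≠ []) : σ^[n] z ≠ [] := by
  induction n with
  | zero => exact hz
  | succ n ih =>
    rw [Function.iterate_succ_apply']
    exact hom_ne_nil h hne ih

lemma LangS_infix_closed {σ : List A → List A} {x y : List A}
    (hxy : x <:+: y) (hy : y ∈ LangS σ) : x ∈ LangS σ := by
  obtain ⟨n, a, hn⟩ := hy
  exact ⟨n, a, hxy.trans hn⟩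

lemma LangS_sigma {σ : List A → List A} (h : IsListHom σ) {x : List A}
    (hx : x ∈ LangS σ) : σ x ∈ LangS σ := by
  obtain ⟨n, a, hn⟩ := hx
  refine ⟨n + 1, a, ?_⟩
  rw [Function.iterate_succ_apply']
  exact hom_infix h hn

/-- All letters appear in `σ^[t] [b]` for `t ≥ k`. -/
lemma letters_in_iterate {σ : List A → List A} (h : IsListHom σ)
    (hne : ∀ a : A, σ [a] ≠ []) {k : ℕ} (hk : ∀ a b : A, b ∈ σ^[k] [a])
    {t : ℕ} (ht : k ≤ t) (b e : A) : e ∈ σ^[t] [b] := by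
  have h1 : σ^[t] [b] = σ^[k] (σ^[t - k] [b]) := by
    rw [← Function.iterate_add_apply]
    congr 1
    omega
  have h2 : σ^[t - k] [b] ≠ [] := iterate_ne_nil h hne _ (by simp)
  obtain ⟨c, z, hcz⟩ : ∃ c z, σ^[t - k] [b] = c :: z := by
    cases hc : σ^[t - k] [b] with
    | nil => exact absurd hc h2
    | cons c z => exact ⟨c, z, rfl⟩
  have h3 : σ^[k] (c :: z) = σ^[k] [c] ++ σ^[k] z := by
    rw [← isListHom_iterate h k]; rfl
  rw [h1, hcz, h3]
  exact List.mem_append_left _ (hk c e)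

/-- Any word of the language is an infix of all high iterates on any letter. -/
lemma infix_of_high_iterate {σ : List A → List A} (h : IsListHom σ)
    (hne : ∀ a : A, σ [a] ≠ []) {k : ℕ} (hk : ∀ a b : A, b ∈ σ^[k] [a])
    {x : List A} (hx : x ∈ LangS σ) :
    ∃ n₀ : ℕ, ∀ t : ℕ, n₀ ≤ t → ∀ b : A, x <:+: σ^[t] [b] := by
  obtain ⟨m, a₀, hm⟩ := hx
  refine ⟨m + k, fun t ht b => ?_⟩
  have h1 : σ^[t] [b] = σ^[m] (σ^[t - m] [b]) := by
    rw [← Function.iterate_add_apply]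
    congr 1
    omega
  have h2 : a₀ ∈ σ^[t - m] [b] := letters_in_iterate h hne hk (by omega) b a₀
  obtain ⟨s, tl, hst⟩ := List.append_of_mem h2
  have h3 : σ^[m] (s ++ a₀ :: tl) = σ^[m] s ++ σ^[m] [a₀] ++ σ^[m] tl := by
    have e1 : s ++ a₀ :: tl = s ++ [a₀] ++ tl := by simp
    rw [e1, isListHom_iterate h m, isListHom_iterate h m]
  have h4 : σ^[m] [a₀] <:+: σ^[t] [b] := by
    rw [h1, hst, h3]
    exact List.infix_append _ _ _
  exact hm.trans h4

lemma two_distinct_length {l : List A} {a b : A} (ha : a ∈ l) (hb : b ∈ l)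
    (hab : a ≠ b) : 2 ≤ l.length := by
  match l, ha with
  | [c], ha' =>
    have h1 : a = c := by simpa using ha'
    have h2 : b = c := by simpa using hb
    exact absurd (h1.trans h2.symm) hab
  | c :: d :: tl, _ => simp

/-- Existence of an iterate with at least three letters. -/
lemma three_letters {σ : List A → List A} (h : IsListHom σ)
    (hne : ∀ a : A, σ [a] ≠ []) {k : ℕ} (hk : ∀ a b : A, b ∈ σ^[k] [a])
    {a b : A} (hab : a ≠ b) (D : A) :
    ∃ e₀ e₁ e₂ tl, σ^[k + k] [D] = e₀ :: e₁ :: e₂ :: tl := by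
  have h1 : σ^[k + k] [D] = σ^[k] (σ^[k] [D]) := Function.iterate_add_apply ..
  have h2 : 2 ≤ (σ^[k] [D]).length :=
    two_distinct_length (hk D a) (hk D b) hab
  obtain ⟨c₁, c₂, rest, hc⟩ : ∃ c₁ c₂ rest, σ^[k] [D] = c₁ :: c₂ :: rest := by
    match hd : σ^[k] [D], h2 with
    | c₁ :: c₂ :: rest, _ => exact ⟨c₁, c₂, rest, rfl⟩
  have h3 : σ^[k] (c₁ :: c₂ :: rest) = σ^[k] [c₁] ++ σ^[k] (c₂ :: rest) := by
    rw [← isListHom_iterate h k]; rfl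
  have h4 : 2 ≤ (σ^[k] [c₁]).length :=
    two_distinct_length (hk c₁ a) (hk c₁ b) hab
  have h5 : 1 ≤ (σ^[k] (c₂ :: rest)).length :=
    List.length_pos_iff.2 (iterate_ne_nil h hne k (by simp))
  have h6 : 3 ≤ (σ^[k + k] [D]).length := by
    rw [h1, hc, h3, List.length_append]
    omega
  match hd : σ^[k + k] [D], h6 with
  | e₀ :: e₁ :: e₂ :: tl, _ => exact ⟨e₀, e₁, e₂, tl, rfl⟩

end LangMachinery
section Construction

variable {A : Type*} [DecidableEq A]

/-- From two consecutive occurrences of `x` in a language word, build a right return word. -/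
lemma mk_return {σ : List A → List A} {Z x : List A} {α β : ℕ}
    (hZ : Z ∈ LangS σ) (hxne : x ≠ [])
    (hα : x <+: Z.drop α) (hβ : x <+: Z.drop β) (hαβ : α < β)
    (hnomid : ∀ j, α < j → j < β → ¬ x <+: Z.drop j) :
    ∃ g, g ∈ rightReturn (LangS σ) x
      ∧ x ++ g = (Z.drop α).take (β - α + x.length) := by
  set n := β - α + x.length with hn
  set u₀ := (Z.drop α).take n with hu₀
  obtain ⟨t, ht⟩ := hα
  obtain ⟨t₂, ht₂⟩ := hβ
  have hZlen : β + x.length ≤ Z.length := by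
    have h1 := congrArg List.length ht₂
    rw [List.length_append, List.length_drop] at h1
    rcases le_or_gt β Z.length with h | h
    · omega
    · rw [List.drop_eq_nil_of_le (le_of_lt h)] at ht₂
      exact absurd (List.append_eq_nil_iff.1 ht₂).1 hxne
  have hu₀x : u₀ = x ++ t.take (β - α) := by
    rw [hu₀, ← ht, List.take_append,
      List.take_of_length_le (by omega), hn]
    congr 2
    omega
  have hu₀len : u₀.length = n := by
    rw [hu₀, List.length_take, List.length_drop]
    omega
  have hdropu₀ : u₀.drop (β - α) = x := by
    rw [hu₀, List.drop_take, List.drop_drop]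
    have h1 : α + (β - α) = β := by omega
    have h2 : n - (β - α) = x.length := by omega
    rw [h1, h2, ← ht₂, List.take_left]
  have hu₀p : u₀ = u₀.take (β - α) ++ x := by
    conv_lhs => rw [← List.take_append_drop (β - α) u₀]
    rw [hdropu₀]
  have hplen : (u₀.take (β - α)).length = β - α := by
    rw [List.length_take]
    omega
  have hu₀L : u₀ ∈ LangS σ :=
    LangS_infix_closed (((List.take_prefix _ _).isInfix).trans
      ((List.drop_suffix _ _).isInfix)) hZ
  refine ⟨t.take (β - α), ⟨?_, ⟨u₀.take (β - α), ?_, ?_⟩, ?_⟩, hu₀x.symm⟩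
  · rw [← hu₀x]; exact hu₀L
  · intro hcon
    rw [hcon] at hplen
    simp at hplen
    omega
  · rw [← hu₀x]; exact hu₀p
  · rintro ⟨p', q', hp', hq', heq⟩
    rw [← hu₀x] at heq
    have hrest : Z.drop α = u₀ ++ (Z.drop α).drop n := by
      rw [hu₀, List.take_append_drop]
    have hZα : Z.drop α = p' ++ x ++ (q' ++ (Z.drop α).drop n) := by
      conv_lhs => rw [hrest]
      rw [heq]
      simp [List.append_assoc]
    have hoccj0 : x <+: (Z.drop α).drop p'.length := by
      rw [hZα, show p' ++ x ++ (q' ++ (Z.drop α).drop n)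
        = p' ++ (x ++ (q' ++ (Z.drop α).drop n)) by simp, List.drop_left]
      exact List.prefix_append _ _
    have hoccj : x <+: Z.drop (α + p'.length) := by
      rw [← List.drop_drop]
      exact hoccj0
    have hlen' : p'.length + x.length + q'.length = n := by
      have := congrArg List.length heq
      rw [hu₀len] at this
      simp [List.length_append] at this
      omega
    have hp'pos : 1 ≤ p'.length := List.length_pos_iff.2 hp'
    have hq'pos : 1 ≤ q'.length := List.length_pos_iff.2 hq'
    exact hnomid (α + p'.length) (by omega) (by omega) hoccj

/-- Key construction: a right return word of `x` whose complete return word contains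
an occurrence of `vc` strictly inside. -/
lemma return_with_payload {σ : List A → List A} (hhom : IsListHom σ)
    (hne : ∀ a : A, σ [a] ≠ []) {k : ℕ} (hk1 : 1 ≤ k) (hk : ∀ a b : A, b ∈ σ^[k] [a])
    {a b : A} (hab : a ≠ b)
    {x vc : List A} (hx : x ∈ LangS σ) (hvc : vc ∈ LangS σ)
    (hlen : vc.length = x.length) (hdiff : x ≠ vc) (hxne : x ≠ []) :
    ∃ g, g ∈ rightReturn (LangS σ) x ∧
      ∃ e₁ e₂, e₁ ≠ [] ∧ e₂ ≠ [] ∧ x ++ g = e₁ ++ vc ++ e₂ := by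
  classical
  obtain ⟨n₀x, hn₀x⟩ := infix_of_high_iterate hhom hne hk hx
  obtain ⟨n₀v, hn₀v⟩ := infix_of_high_iterate hhom hne hk hvc
  set T := max n₀x n₀v with hT
  obtain ⟨e₀, e₁', e₂', tl, hblocks⟩ := three_letters hhom hne hk hab a
  set Z := σ^[T + (k + k)] [a] with hZdef
  have hZmem : Z ∈ LangS σ := ⟨T + (k + k), a, List.infix_refl _⟩
  have hZeq : Z = σ^[T] [e₀] ++ (σ^[T] [e₁'] ++ (σ^[T] [e₂'] ++ σ^[T] tl)) := by
    rw [hZdef, Function.iterate_add_apply, hblocks]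
    have hsp : e₀ :: e₁' :: e₂' :: tl = [e₀] ++ ([e₁'] ++ ([e₂'] ++ tl)) := by simp
    rw [hsp, isListHom_iterate hhom T, isListHom_iterate hhom T, isListHom_iterate hhom T]
  obtain ⟨l₀, r₀, hC₀⟩ := hn₀x T (le_max_left _ _) e₀
  obtain ⟨l₁, r₁, hC₁⟩ := hn₀v T (le_max_right _ _) e₁'
  obtain ⟨l₂, r₂, hC₂⟩ := hn₀x T (le_max_left _ _) e₂'
  set α := l₀.length with hα
  set τ := (σ^[T] [e₀]).length + l₁.length with hτ
  set β := (σ^[T] [e₀]).length + (σ^[T] [e₁']).length + l₂.length with hβ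
  have hoccα : x <+: Z.drop α := by
    have h1 : Z = l₀ ++ (x ++ (r₀ ++ (σ^[T] [e₁'] ++ (σ^[T] [e₂'] ++ σ^[T] tl)))) := by
      rw [hZeq, ← hC₀]; simp [List.append_assoc]
    rw [h1, hα, List.drop_left]
    exact List.prefix_append _ _
  have hoccτ : vc <+: Z.drop τ := by
    have h1 : Z = (σ^[T] [e₀] ++ l₁)
        ++ (vc ++ (r₁ ++ (σ^[T] [e₂'] ++ σ^[T] tl))) := by
      rw [hZeq, ← hC₁]; simp [List.append_assoc]
    have h2 : τ = (σ^[T] [e₀] ++ l₁).length := by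
      rw [List.length_append, hτ]
    rw [h1, h2, List.drop_left]
    exact List.prefix_append _ _
  have hoccβ : x <+: Z.drop β := by
    have h1 : Z = ((σ^[T] [e₀] ++ σ^[T] [e₁']) ++ l₂)
        ++ (x ++ (r₂ ++ σ^[T] tl)) := by
      rw [hZeq, ← hC₂]; simp [List.append_assoc]
    have h2 : β = ((σ^[T] [e₀] ++ σ^[T] [e₁']) ++ l₂).length := by
      rw [hβ, List.length_append, List.length_append]
    rw [h1, h2, List.drop_left]
    exact List.prefix_append _ _
  have hxpos : 1 ≤ x.length := List.length_pos_iff.2 hxne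
  have hC₀len : α + x.length ≤ (σ^[T] [e₀]).length := by
    have h1 := congrArg List.length hC₀
    simp [List.length_append] at h1
    omega
  have hC₁len : τ + vc.length ≤ (σ^[T] [e₀]).length + (σ^[T] [e₁']).length := by
    have h1 := congrArg List.length hC₁
    simp [List.length_append] at h1
    omega
  have hατ : α < τ := by
    have := hC₀len; rw [hτ]; omega
  have hτβ : τ + vc.length ≤ β := by
    have := hC₁len; rw [hβ]; omega
  -- greatest occurrence position ≤ τ
  set P : ℕ → Prop := fun j => x <+: Z.drop j with hP
  have hPdec : DecidablePred P := fun j => by rw [hP]; infer_instance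
  set αs := Nat.findGreatest P τ with hαs
  have hαsocc : P αs := Nat.findGreatest_spec (m := α) (by omega) hoccα
  have hαsle : αs ≤ τ := Nat.findGreatest_le τ
  have hαsne : αs ≠ τ := by
    intro hcon
    have hocc : x <+: Z.drop τ := by rw [← hcon]; exact hαsocc
    have : x = vc :=
      (List.prefix_of_prefix_length_le hocc hoccτ (by omega)).eq_of_length (by omega)
    exact hdiff this
  have hαslt : αs < τ := lt_of_le_of_ne hαsle hαsne
  have hαsmax : ∀ j, αs < j → j ≤ τ → ¬ P j := fun j h1 h2 =>
    Nat.findGreatest_is_greatest h1 h2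
  -- least occurrence position > αs
  have hβex : ∃ j, αs < j ∧ P j := ⟨β, by omega, hoccβ⟩
  set βs := Nat.find hβex with hβs
  obtain ⟨hβs1, hβs2⟩ : αs < βs ∧ P βs := Nat.find_spec hβex
  have hβsmin : ∀ j, j < βs → ¬ (αs < j ∧ P j) := fun j hj => Nat.find_min hβex hj
  have hτβs : τ < βs := by
    by_contra hcon
    push_neg at hcon
    exact hαsmax βs hβs1 hcon hβs2
  have hβsβ : βs ≤ β := Nat.find_min' hβex ⟨by omega, hoccβ⟩
  -- build the return word
  obtain ⟨g, hg, hgeq⟩ := mk_return hZmem hxne hαsocc hβs2 hβs1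
    (fun j h1 h2 hocc => hβsmin j h2 ⟨h1, hocc⟩)
  refine ⟨g, hg, ?_⟩
  -- extract the payload
  set n := βs - αs + x.length with hn
  set δ := τ - αs with hδ
  obtain ⟨t₃, ht₃⟩ := hoccτ
  have hZlen : βs + x.length ≤ Z.length := by
    obtain ⟨t₂, ht₂⟩ := hβs2
    have h1 := congrArg List.length ht₂
    rw [List.length_append, List.length_drop] at h1
    rcases le_or_gt βs Z.length with h | h
    · omega
    · rw [List.drop_eq_nil_of_le (le_of_lt h)] at ht₂
      exact absurd (List.append_eq_nil_iff.1 ht₂).1 hxne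
  have hdropδ : (x ++ g).drop δ = vc ++ t₃.take (n - δ - vc.length) := by
    rw [hgeq, List.drop_take, List.drop_drop]
    have h1 : αs + δ = τ := by omega
    rw [h1, ← ht₃, List.take_append,
      List.take_of_length_le (show vc.length ≤ n - δ by omega)]
  refine ⟨(x ++ g).take δ, t₃.take (n - δ - vc.length), ?_, ?_, ?_⟩
  · intro hcon
    have h1 := congrArg List.length hcon
    rw [List.length_take, hgeq, List.length_take, List.length_drop] at h1
    simp at h1
    omega
  · intro hcon
    have h1 := congrArg List.length hcon
    have ht₃len : t₃.length = Z.length - τ - vc.length := by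
      have h2 := congrArg List.length ht₃
      rw [List.length_append, List.length_drop] at h2
      omega
    rw [List.length_take, ht₃len] at h1
    simp at h1
    omega
  · conv_lhs => rw [← List.take_append_drop δ (x ++ g)]
    rw [hdropδ]
    simp
end Construction
section Construction2

variable {A : Type*} [DecidableEq A]

/-- Every nonempty word of the language has a right return word. -/
lemma return_exists {σ : List A → List A} (hhom : IsListHom σ)
    (hne : ∀ a : A, σ [a] ≠ []) {k : ℕ} (hk : ∀ a b : A, b ∈ σ^[k] [a])
    {a b : A} (hab : a ≠ b)
    {x : List A} (hx : x ∈ LangS σ) (hxne : x ≠ []) :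
    ∃ g, g ∈ rightReturn (LangS σ) x := by
  classical
  obtain ⟨n₀x, hn₀x⟩ := infix_of_high_iterate hhom hne hk hx
  obtain ⟨e₀, e₁', e₂', tl, hblocks⟩ := three_letters hhom hne hk hab a
  set Z := σ^[n₀x + (k + k)] [a] with hZdef
  have hZmem : Z ∈ LangS σ := ⟨n₀x + (k + k), a, List.infix_refl _⟩
  have hZeq : Z = σ^[n₀x] [e₀] ++ (σ^[n₀x] [e₁'] ++ (σ^[n₀x] [e₂'] ++ σ^[n₀x] tl)) := by
    rw [hZdef, Function.iterate_add_apply, hblocks]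
    have hsp : e₀ :: e₁' :: e₂' :: tl = [e₀] ++ ([e₁'] ++ ([e₂'] ++ tl)) := by simp
    rw [hsp, isListHom_iterate hhom n₀x, isListHom_iterate hhom n₀x,
      isListHom_iterate hhom n₀x]
  obtain ⟨l₀, r₀, hC₀⟩ := hn₀x n₀x (le_refl _) e₀
  obtain ⟨l₁, r₁, hC₁⟩ := hn₀x n₀x (le_refl _) e₁'
  set α := l₀.length with hα
  set β := (σ^[n₀x] [e₀]).length + l₁.length with hβ
  have hoccα : x <+: Z.drop α := by
    have h1 : Z = l₀ ++ (x ++ (r₀ ++ (σ^[n₀x] [e₁'] ++ (σ^[n₀x] [e₂'] ++ σ^[n₀x] tl)))) := by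
      rw [hZeq, ← hC₀]; simp [List.append_assoc]
    rw [h1, hα, List.drop_left]
    exact List.prefix_append _ _
  have hoccβ : x <+: Z.drop β := by
    have h1 : Z = (σ^[n₀x] [e₀] ++ l₁)
        ++ (x ++ (r₁ ++ (σ^[n₀x] [e₂'] ++ σ^[n₀x] tl))) := by
      rw [hZeq, ← hC₁]; simp [List.append_assoc]
    have h2 : β = (σ^[n₀x] [e₀] ++ l₁).length := by
      rw [List.length_append, hβ]
    rw [h1, h2, List.drop_left]
    exact List.prefix_append _ _
  have hxpos : 1 ≤ x.length := List.length_pos_iff.2 hxne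
  have hC₀len : α + x.length ≤ (σ^[n₀x] [e₀]).length := by
    have h1 := congrArg List.length hC₀
    simp [List.length_append] at h1
    omega
  have hαβ : α < β := by rw [hβ]; omega
  set P : ℕ → Prop := fun j => x <+: Z.drop j with hP
  have hβex : ∃ j, α < j ∧ P j := ⟨β, hαβ, hoccβ⟩
  set βs := Nat.find hβex with hβs
  obtain ⟨hβs1, hβs2⟩ : α < βs ∧ P βs := Nat.find_spec hβex
  have hβsmin : ∀ j, j < βs → ¬ (α < j ∧ P j) := fun j hj => Nat.find_min hβex hj
  obtain ⟨g, hg, _⟩ := mk_return hZmem hxne hoccα hβs2 hβs1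
    (fun j h1 h2 hocc => hβsmin j h2 ⟨h1, hocc⟩)
  exact ⟨g, hg⟩

end Construction2

/-- if (|A|-1)·(|w| + |σ(a_min)|) ≤ ‖σ‖ - |A|, then for all
sufficiently long bispecial words v, `σ(R̄(v·a_min)) ≠ R̄(σ(v·a_min))`. -/
theorem return_preservation_fails_right {A : Type*} [Fintype A] [DecidableEq A]
    (hA : 1 < Fintype.card A) (u : List A) (hu : u ≠ []) (π : Equiv.Perm A)
    (w : List A) (hw : w <+: pal u)
    (σ : List A → List A) (hσhom : IsListHom σ)
    (hσ : ∀ a : A, psiW u [π a] ++ w = w ++ σ [a])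
    (hprim : IsPrimitiveSubst σ)
    (amin : A) (hmin : ∀ a : A, a ≠ amin → (σ [amin]).length < (σ [a]).length)
    (hcond : (Fintype.card A - 1) * (w.length + (σ [amin]).length) ≤
      (∑ a : A, (σ [a]).length) - Fintype.card A) :
    ∃ N : ℕ, ∀ n : ℕ, N ≤ n → ∀ v : List A, v.length = n →
      LeftSpecial (LangS σ) v → RightSpecial (LangS σ) v →
      σ '' rightReturn (LangS σ) (v ++ [amin]) ≠
        rightReturn (LangS σ) (σ (v ++ [amin])) := by
  classical
  obtain ⟨k, hk1, hk⟩ := hprim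
  have hnonempty : Nonempty A := ⟨amin⟩
  -- basic facts about σ
  have hσlen : ∀ a : A, (σ [a]).length = (psiW u [π a]).length := by
    intro a
    have h1 := congrArg List.length (hσ a)
    simp only [List.length_append] at h1
    omega
  have hne : ∀ a : A, σ [a] ≠ [] := by
    intro a hcon
    have h2 : psiW u [π a] ≠ [] := psiW_ne_nil u (by simp)
    have h3 := hσlen a
    rw [hcon] at h3
    simp at h3
    exact h2 (List.length_eq_zero_iff.1 h3.symm)
  -- the norm identity transported through π
  have hsum : ∑ a : A, (σ [a]).length = ∑ b : A, (psiW u [b]).length := by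
    rw [Finset.sum_congr rfl (fun a _ => hσlen a)]
    exact Equiv.sum_comp π (fun b => (psiW u [b]).length)
  have hnorm : ∑ a : A, (σ [a]).length
      = (Fintype.card A - 1) * (pal u).length + Fintype.card A := by
    rw [hsum]; exact psi_norm u
  -- key length bound : |w| + |σ(amin)| ≤ |Pal(u)|
  have hPw : w.length + (σ [amin]).length ≤ (pal u).length := by
    have h1 : (Fintype.card A - 1) * (w.length + (σ [amin]).length)
        ≤ (Fintype.card A - 1) * (pal u).length := by
      have h2 : (∑ a : A, (σ [a]).length) - Fintype.card A
          = (Fintype.card A - 1) * (pal u).length := by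
        rw [hnorm]; omega
      rw [← h2]; exact hcond
    exact Nat.le_of_mul_le_mul_left h1 (by omega)
  -- Lemma C : σ(amin) is a prefix of every σ(c)
  have hC : ∀ c : A, σ [amin] <+: σ [c] := by
    intro c
    by_cases hc : c = amin
    · rw [hc]
    · have hwpal : ∀ e : A, psiW u [e] ++ w <+: pal (u ++ [e]) := by
        intro e
        rw [justin]
        obtain ⟨t, ht⟩ := hw
        exact ⟨t, by rw [List.append_assoc, ht]⟩
      have hminlen : (psiW u [π amin]).length + w.length ≤ (pal u).length := by
        have := hσlen amin
        omega
      have h2 : psiW u [π amin] ++ w <+: pal u := by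
        apply List.prefix_of_prefix_length_le (hwpal (π amin)) (pal_prefix_letter u (π amin))
        rw [List.length_append]
        omega
      have h3 : psiW u [π amin] ++ w <+: pal (u ++ [π c]) :=
        h2.trans (pal_prefix_letter u (π c))
      have h5 : psiW u [π amin] ++ w <+: psiW u [π c] ++ w := by
        apply List.prefix_of_prefix_length_le h3 (hwpal (π c))
        rw [List.length_append, List.length_append]
        have h6 : (σ [amin]).length < (σ [c]).length := hmin c hc
        have h7 := hσlen amin
        have h8 := hσlen c
        omega
      have h6 : w ++ σ [amin] <+: w ++ σ [c] := by
        rw [← hσ amin, ← hσ c]; exact h5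
      obtain ⟨t, ht⟩ := h6
      refine ⟨t, ?_⟩
      rw [List.append_assoc] at ht
      exact List.append_cancel_left ht
  have hCw : ∀ z : List A, z ≠ [] → σ [amin] <+: σ z := by
    intro z hz
    cases z with
    | nil => exact absurd rfl hz
    | cons c z' =>
      have h1 : σ (c :: z') = σ [c] ++ σ z' := by
        rw [← hσhom]; rfl
      rw [h1]
      exact (hC c).trans (List.prefix_append _ _)
  obtain ⟨d₁, d₂, hd⟩ : ∃ d₁ d₂ : A, d₁ ≠ d₂ := Fintype.exists_pair_of_one_lt_card hA
  refine ⟨0, fun n _ v hvlen hLS hRS => ?_⟩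
  intro hE
  -- a right-special extension letter different from amin
  obtain ⟨c₁, c₂, hc12, hvc₁, hvc₂⟩ := hRS
  obtain ⟨c, hcamin, hvc⟩ : ∃ c, c ≠ amin ∧ v ++ [c] ∈ LangS σ := by
    by_cases h : c₁ = amin
    · refine ⟨c₂, ?_, hvc₂⟩
      rw [← h]; exact fun hcon => hc12 hcon.symm
    · exact ⟨c₁, h, hvc₁⟩
  have hxne : v ++ [amin] ≠ [] := by simp
  by_cases hxL : v ++ [amin] ∈ LangS σ
  · -- main case
    have hdiff : v ++ [amin] ≠ v ++ [c] := by
      intro hcon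
      have h1 : [amin] = [c] := List.append_cancel_left hcon
      have h2 : amin = c := by injection h1
      exact hcamin h2.symm
    obtain ⟨g, hg, e₁, e₂, he₁, he₂, hsplit⟩ :=
      return_with_payload hσhom hne hk1 hk hd hxL hvc (by simp) hdiff hxne
    have hσg : σ g ∈ rightReturn (LangS σ) (σ (v ++ [amin])) := by
      rw [← hE]; exact ⟨g, hg, rfl⟩
    obtain ⟨_, _, hnoint⟩ := hσg
    apply hnoint
    have hsplit2 : (v ++ [amin]) ++ g = e₁ ++ ((v ++ ([c] ++ e₂))) := by
      rw [hsplit]; simp [List.append_assoc]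
    obtain ⟨t, ht⟩ := hCw ([c] ++ e₂) (by simp)
    have htne : t ≠ [] := by
      intro hcon
      have h1 := congrArg List.length ht
      have h2 : σ ([c] ++ e₂) = σ [c] ++ σ e₂ := hσhom _ _
      rw [hcon, h2, List.length_append, List.length_append] at h1
      have h3 := hmin c hcamin
      simp at h1
      omega
    refine ⟨σ e₁, t, hom_ne_nil hσhom hne he₁, htne, ?_⟩
    have hchain : σ (v ++ [amin]) ++ σ g = σ e₁ ++ (σ v ++ (σ [amin] ++ t)) := by
      rw [← hσhom, hsplit2, hσhom, hσhom, ht]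
    rw [hchain, hσhom v [amin]]
    simp [List.append_assoc]
  · -- degenerate case : v ++ [amin] not in the language
    have hRempty : rightReturn (LangS σ) (v ++ [amin]) = ∅ := by
      ext r
      simp only [Set.mem_empty_iff_false, iff_false]
      rintro ⟨hmem, -, -⟩
      exact hxL (LangS_infix_closed ⟨[], r, by simp⟩ hmem)
    have hXL : σ (v ++ [amin]) ∈ LangS σ := by
      have h1 : σ (v ++ [amin]) <+: σ (v ++ [c]) := by
        rw [hσhom, hσhom]
        obtain ⟨t, ht⟩ := hC c
        exact ⟨t, by rw [List.append_assoc, ht]⟩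
      exact LangS_infix_closed h1.isInfix (LangS_sigma hσhom hvc)
    have hXne : σ (v ++ [amin]) ≠ [] := hom_ne_nil hσhom hne hxne
    obtain ⟨g, hg⟩ := return_exists hσhom hne hk hd hXL hXne
    rw [← hE, hRempty] at hg
    simp at hg
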